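/- arXiv:1106.5431 — 5 statements merged into one kernel-verified Lean document; each statement's English description precedes it below -/
import Mathlib

section
/- The group of automorphisms of the unital associative real algebra of quaternions ℍ is isomorphic to SO(3), acting trivially on the real part and by rotations on the imaginary part Im ℍ. -/
/-- The basis `i, j, k` of the imaginary quaternions. -/
noncomputable def quatImBasis : Fin 3 → Quaternion ℝ :=
  ![⟨0, 1, 0, 0⟩, ⟨0, 0, 1, 0⟩, ⟨0, 0, 0, 1⟩]

/-!
Writing quaternions as `r + v` with `r ∈ ℝ` and `v ∈ ℝ³`, the product of two pure quaternions is
`v w = -(v ⬝ w) + v ⨯ w`. A rotation preserves dot and cross products, so fixing `ℝ` and rotating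
`ℝ³` is an algebra automorphism; this gives a homomorphism `SO(3) → Aut ℍ`, injective because the
rotation is read off from the images of `i, j, k`.

Conversely an automorphism `φ` fixes `ℝ`, and it maps pure quaternions to pure quaternions, since
these are the quaternions whose square is a nonpositive real. By the product formula `φ` then
preserves dot and cross products on `ℝ³`: its matrix there is orthogonal, with determinant
`φ(i) ⬝ (φ(j) ⨯ φ(k)) = φ(i) ⬝ φ(i) = 1`.
-/

open Matrix Quaternion

namespace Matrix

variable {n R : Type*} [Fintype n] [DecidableEq n] [CommRing R]

theorem adjugate_eq_transpose_of_mem_specialOrthogonalGroup {A : Matrix n n R}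
    (hA : A ∈ specialOrthogonalGroup n R) : adjugate A = Aᵀ := by
  obtain ⟨hAA, hdet⟩ := mem_specialOrthogonalGroup_iff.mp hA
  rw [mem_orthogonalGroup_iff'] at hAA
  calc adjugate A = Aᵀ * (A * adjugate A) := by rw [← Matrix.mul_assoc, hAA, Matrix.one_mul]
    _ = Aᵀ := by rw [mul_adjugate, hdet, one_smul, Matrix.mul_one]

theorem mulVec_dotProduct_mulVec_of_mem_orthogonalGroup {A : Matrix n n R}
    (hA : A ∈ orthogonalGroup n R) (v w : n → R) : A *ᵥ v ⬝ᵥ A *ᵥ w = v ⬝ᵥ w := by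
  rw [dotProduct_mulVec, ← vecMul_transpose, vecMul_vecMul, (mem_orthogonalGroup_iff' n R).mp hA,
    vecMul_one]

theorem mulVec_cross_mulVec (A : Matrix (Fin 3) (Fin 3) R) (v w : Fin 3 → R) :
    (A *ᵥ v) ⨯₃ (A *ᵥ w) = (adjugate A)ᵀ *ᵥ (v ⨯₃ w) := by
  ext i
  fin_cases i <;>
    simp [cross_apply, mulVec, dotProduct, Fin.sum_univ_three, adjugate_fin_three] <;> ring

theorem mulVec_cross_mulVec_of_mem_specialOrthogonalGroup {A : Matrix (Fin 3) (Fin 3) R}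
    (hA : A ∈ specialOrthogonalGroup (Fin 3) R) (v w : Fin 3 → R) :
    (A *ᵥ v) ⨯₃ (A *ᵥ w) = A *ᵥ (v ⨯₃ w) := by
  rw [mulVec_cross_mulVec, adjugate_eq_transpose_of_mem_specialOrthogonalGroup hA,
    transpose_transpose]

end Matrix

namespace Quaternion

section CommRing

variable {R : Type*} [CommRing R]

def mkVec (r : R) (v : Fin 3 → R) : ℍ[R] := ⟨r, v 0, v 1, v 2⟩

def imVec (a : ℍ[R]) : Fin 3 → R := ![a.imI, a.imJ, a.imK]

@[simp] theorem re_mkVec (r : R) (v : Fin 3 → R) : (mkVec r v).re = r := rfl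
@[simp] theorem imI_mkVec (r : R) (v : Fin 3 → R) : (mkVec r v).imI = v 0 := rfl
@[simp] theorem imJ_mkVec (r : R) (v : Fin 3 → R) : (mkVec r v).imJ = v 1 := rfl
@[simp] theorem imK_mkVec (r : R) (v : Fin 3 → R) : (mkVec r v).imK = v 2 := rfl

@[simp] theorem imVec_mkVec (r : R) (v : Fin 3 → R) : (mkVec r v).imVec = v := by
  ext i; fin_cases i <;> rfl

@[simp] theorem mkVec_re_imVec (a : ℍ[R]) : mkVec a.re a.imVec = a := rfl

theorem mkVec_mul_mkVec (r s : R) (v w : Fin 3 → R) :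
    mkVec r v * mkVec s w = mkVec (r * s - v ⬝ᵥ w) (r • w + s • v + v ⨯₃ w) := by
  ext <;> simp [re_mul, imI_mul, imJ_mul, imK_mul, cross_apply, dotProduct, Fin.sum_univ_three,
    vecHead, vecTail] <;> ring

theorem mul_eq_mkVec_of_re_eq_zero {a b : ℍ[R]} (ha : a.re = 0) (hb : b.re = 0) :
    a * b = mkVec (-(a.imVec ⬝ᵥ b.imVec)) (a.imVec ⨯₃ b.imVec) := by
  rw [← mkVec_re_imVec a, ← mkVec_re_imVec b, mkVec_mul_mkVec, ha, hb]
  simp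

def rotate (A : Matrix (Fin 3) (Fin 3) R) : ℍ[R] →ₗ[R] ℍ[R] where
  toFun a := mkVec a.re (A *ᵥ a.imVec)
  map_add' a b := by
    ext <;> simp [imVec, mulVec, dotProduct, Fin.sum_univ_three] <;> ring
  map_smul' r a := by
    ext <;> simp [imVec, mulVec, dotProduct, Fin.sum_univ_three] <;> ring

theorem rotate_mkVec (A : Matrix (Fin 3) (Fin 3) R) (r : R) (v : Fin 3 → R) :
    rotate A (mkVec r v) = mkVec r (A *ᵥ v) := by
  simp [rotate]

theorem rotate_mul (A B : Matrix (Fin 3) (Fin 3) R) :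
    rotate (A * B) = rotate A ∘ₗ rotate B := by
  ext a : 1
  simp [rotate, mulVec_mulVec]

theorem rotate_one : rotate (1 : Matrix (Fin 3) (Fin 3) R) = LinearMap.id := by
  ext a : 1
  simp [rotate]

theorem rotate_apply_one (A : Matrix (Fin 3) (Fin 3) R) : rotate A 1 = 1 := by
  ext <;> simp [rotate, imVec, mulVec, dotProduct, Fin.sum_univ_three]

theorem rotate_apply_mul {A : Matrix (Fin 3) (Fin 3) R}
    (hA : A ∈ specialOrthogonalGroup (Fin 3) R) (a b : ℍ[R]) :
    rotate A (a * b) = rotate A a * rotate A b := by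
  rw [← mkVec_re_imVec a, ← mkVec_re_imVec b, mkVec_mul_mkVec]
  simp only [rotate_mkVec, mkVec_mul_mkVec, mulVec_add, mulVec_smul,
    mulVec_cross_mulVec_of_mem_specialOrthogonalGroup hA,
    mulVec_dotProduct_mulVec_of_mem_orthogonalGroup hA.1]

theorem rotate_comp_rotate_inv (A : specialOrthogonalGroup (Fin 3) R) :
    rotate (A : Matrix (Fin 3) (Fin 3) R) ∘ₗ rotate ↑A⁻¹ = LinearMap.id := by
  rw [← rotate_mul, ← Submonoid.coe_mul, mul_inv_cancel, Submonoid.coe_one, rotate_one]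

def rotationAlgEquiv (A : specialOrthogonalGroup (Fin 3) R) : ℍ[R] ≃ₐ[R] ℍ[R] :=
  AlgEquiv.ofLinearEquiv
    (.ofLinearMap (rotate A) (rotate ↑A⁻¹) (rotate_comp_rotate_inv A)
      (by simpa using rotate_comp_rotate_inv A⁻¹))
    (rotate_apply_one _) (rotate_apply_mul A.2)

@[simp] theorem rotationAlgEquiv_apply (A : specialOrthogonalGroup (Fin 3) R) (a : ℍ[R]) :
    rotationAlgEquiv A a = rotate A a := rfl

def rotationHom : specialOrthogonalGroup (Fin 3) R →* (ℍ[R] ≃ₐ[R] ℍ[R]) where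
  toFun := rotationAlgEquiv
  map_one' := AlgEquiv.ext fun a => by simp [rotate_one]
  map_mul' A B := AlgEquiv.ext fun a => by simp [rotate_mul]

end CommRing

theorem mkVec_eq_coe_add_sum (r : ℝ) (v : Fin 3 → ℝ) :
    mkVec r v = r + ∑ i, v i • quatImBasis i := by
  rw [Fin.sum_univ_three]
  ext <;> simp only [re_add, imI_add, imJ_add, imK_add, re_smul, imI_smul, imJ_smul, imK_smul] <;>
    simp [quatImBasis]

theorem quatImBasis_eq_mkVec (j : Fin 3) : quatImBasis j = mkVec 0 (Pi.single j 1) := by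
  fin_cases j <;> ext <;> simp [quatImBasis]

theorem re_quatImBasis (j : Fin 3) : (quatImBasis j).re = 0 := by
  rw [quatImBasis_eq_mkVec, re_mkVec]

theorem imVec_quatImBasis (j : Fin 3) : (quatImBasis j).imVec = Pi.single j 1 := by
  rw [quatImBasis_eq_mkVec, imVec_mkVec]

theorem quatImBasis_one_mul_two : quatImBasis 1 * quatImBasis 2 = quatImBasis 0 := by
  ext <;> simp only [re_mul, imI_mul, imJ_mul, imK_mul] <;> simp [quatImBasis]

theorem rotate_quatImBasis (A : Matrix (Fin 3) (Fin 3) ℝ) (j : Fin 3) :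
    rotate A (quatImBasis j) = mkVec 0 (A.col j) := by
  rw [quatImBasis_eq_mkVec, rotate_mkVec, mulVec_single_one]

theorem rotationHom_apply_quatImBasis (A : specialOrthogonalGroup (Fin 3) ℝ) (j : Fin 3) :
    rotationHom A (quatImBasis j) = ∑ i, (A : Matrix (Fin 3) (Fin 3) ℝ) i j • quatImBasis i := by
  simp [rotationHom, rotate_quatImBasis, mkVec_eq_coe_add_sum]

theorem rotationHom_injective : Function.Injective (rotationHom (R := ℝ)) := by
  intro A B hAB
  ext i j
  simpa [rotationHom, rotate_quatImBasis] using
    congr_arg (fun φ : ℍ[ℝ] ≃ₐ[ℝ] ℍ[ℝ] => imVec (φ (quatImBasis j)) i) hAB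

theorem re_eq_zero_of_sq_eq_neg_coe {a : ℍ[ℝ]} {r : ℝ} (hr : 0 ≤ r) (h : a ^ 2 = -(r : ℍ[ℝ])) :
    a.re = 0 := by
  have hnorm : normSq a = r := by
    rw [← sq_eq_sq₀ normSq_nonneg hr, ← map_pow, h, ← coe_neg, normSq_coe, neg_sq]
  rw [← sq_eq_neg_normSq, h, hnorm]

variable {F : Type*} [FunLike F ℍ[ℝ] ℍ[ℝ]]

noncomputable def imMatrix (f : F) : Matrix (Fin 3) (Fin 3) ℝ :=
  Matrix.of fun i j => (f (quatImBasis j)).imVec i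

theorem col_imMatrix (f : F) (j : Fin 3) : (imMatrix f).col j = (f (quatImBasis j)).imVec := rfl

variable [AlgHomClass F ℝ ℍ[ℝ] ℍ[ℝ]]

theorem re_map (f : F) (a : ℍ[ℝ]) : (f a).re = a.re := by
  have him : (f a.im).re = 0 :=
    re_eq_zero_of_sq_eq_neg_coe normSq_nonneg
      (by rw [← map_pow, im_sq, ← coe_neg, ← algebraMap_def, AlgHomClass.commutes])
  conv_lhs => rw [← re_add_im a, map_add, ← algebraMap_def, AlgHomClass.commutes]
  rw [re_add, algebraMap_def, re_coe, him, add_zero]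

theorem imVec_map_dotProduct_imVec_map (f : F) {a b : ℍ[ℝ]} (ha : a.re = 0) (hb : b.re = 0) :
    (f a).imVec ⬝ᵥ (f b).imVec = a.imVec ⬝ᵥ b.imVec := by
  have h := congr_arg QuaternionAlgebra.re (map_mul f a b)
  rw [re_map, mul_eq_mkVec_of_re_eq_zero ha hb,
    mul_eq_mkVec_of_re_eq_zero ((re_map f a).trans ha) ((re_map f b).trans hb)] at h
  simpa using h.symm

theorem imVec_map_mul (f : F) {a b : ℍ[ℝ]} (ha : a.re = 0) (hb : b.re = 0) :
    (f (a * b)).imVec = (f a).imVec ⨯₃ (f b).imVec := by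
  rw [map_mul, mul_eq_mkVec_of_re_eq_zero ((re_map f a).trans ha) ((re_map f b).trans hb),
    imVec_mkVec]

theorem map_quatImBasis (f : F) (j : Fin 3) :
    f (quatImBasis j) = mkVec 0 ((imMatrix f).col j) := by
  rw [col_imMatrix, ← re_quatImBasis j, ← re_map f, mkVec_re_imVec]

theorem map_eq_rotate_imMatrix (f : F) (a : ℍ[ℝ]) : f a = rotate (imMatrix f) a := by
  conv_lhs => rw [← mkVec_re_imVec a, mkVec_eq_coe_add_sum]
  simp only [map_add, map_sum, map_smul, ← algebraMap_def, AlgHomClass.commutes, map_quatImBasis]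
  ext <;> simp [rotate, mulVec, dotProduct, Fin.sum_univ_three] <;> ring

theorem imMatrix_transpose_mul_self (f : F) : (imMatrix f)ᵀ * imMatrix f = 1 := by
  ext j k
  rw [mul_apply', one_apply]
  change (imMatrix f).col j ⬝ᵥ (imMatrix f).col k = _
  rw [col_imMatrix, col_imMatrix,
    imVec_map_dotProduct_imVec_map f (re_quatImBasis j) (re_quatImBasis k), imVec_quatImBasis,
    imVec_quatImBasis, dotProduct_single, Pi.single_apply, mul_one]
  exact if_congr eq_comm rfl rfl

theorem det_imMatrix (f : F) : (imMatrix f).det = 1 := by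
  set M := imMatrix f
  have hcross : M.col 1 ⨯₃ M.col 2 = M.col 0 := by
    rw [col_imMatrix, col_imMatrix, ← imVec_map_mul f (re_quatImBasis 1) (re_quatImBasis 2),
      quatImBasis_one_mul_two, col_imMatrix]
  have hunit : M.col 0 ⬝ᵥ M.col 0 = 1 := by
    have h := congr_fun₂ (imMatrix_transpose_mul_self f) 0 0
    rwa [mul_apply'] at h
  calc M.det = det ![M.col 0, M.col 1, M.col 2] := by
        rw [← det_transpose]
        congr 1
        ext i j
        fin_cases i <;> rfl
    _ = 1 := by rw [← triple_product_eq_det, hcross, hunit]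

theorem imMatrix_mem_specialOrthogonalGroup (f : F) :
    imMatrix f ∈ specialOrthogonalGroup (Fin 3) ℝ :=
  ⟨(mem_orthogonalGroup_iff' _ _).mpr (imMatrix_transpose_mul_self f), det_imMatrix f⟩

theorem rotationHom_bijective : Function.Bijective (rotationHom (R := ℝ)) :=
  ⟨rotationHom_injective, fun φ => ⟨⟨imMatrix φ, imMatrix_mem_specialOrthogonalGroup φ⟩,
    AlgEquiv.ext fun a => (map_eq_rotate_imMatrix φ a).symm⟩⟩

end Quaternion

/-- The group of automorphisms of the unital associative real algebra `ℍ` is isomorphic to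
`SO(3)`, acting trivially on the real part and by rotations on the imaginary part. -/
theorem auts_of_quaternions_iso_SO3 :
    ∃ e : (Quaternion ℝ ≃ₐ[ℝ] Quaternion ℝ) ≃* Matrix.specialOrthogonalGroup (Fin 3) ℝ,
      ∀ φ : Quaternion ℝ ≃ₐ[ℝ] Quaternion ℝ,
        (∀ r : ℝ, φ (r : Quaternion ℝ) = (r : Quaternion ℝ)) ∧
        (∀ j : Fin 3, φ (quatImBasis j) =
          ∑ i : Fin 3, ((e φ : Matrix (Fin 3) (Fin 3) ℝ) i j) • quatImBasis i) := by
  refine ⟨(MulEquiv.ofBijective _ rotationHom_bijective).symm, fun φ => ⟨φ.commutes, fun j => ?_⟩⟩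
  rw [← rotationHom_apply_quatImBasis, MulEquiv.ofBijective_apply_symm_apply]
end

section
/- Every automorphism of the algebra ℍ is inner: for any algebra automorphism φ of ℍ there exists a unit quaternion q (with |q| = 1) such that φ(x) = q x q⁻¹ for all x ∈ ℍ. -/
/-!
An automorphism sends `i, j` to another pair `u, v` with `u² = v² = -1` and `vu = -uv`, and an
algebra map out of `ℍ` is determined by the images of `i` and `j`. In a division ring any two such
pairs `(a, b)`, `(c, d)` are conjugate by an explicit element: `a + c` (or `b`, if `c = -a`) carries
`a` to `c`; once `d` is pulled back to `w` by it, `1 - w b` (or `a`, if `w = -b`) commutes with `a`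
and carries `b` to `w`. Rescaling the conjugating element to norm one changes nothing, since real
scalars are central.
-/

open scoped Quaternion

section Ring

variable {R : Type*} [Ring R]

theorem ne_zero_of_mul_self_eq_neg_one [Nontrivial R] {a : R} (ha : a * a = -1) : a ≠ 0 := by
  rintro rfl
  simp at ha

theorem add_mul_eq_mul_add_of_mul_self_eq {a c : R} (h : a * a = c * c) :
    (a + c) * a = c * (a + c) := by
  rw [add_mul, mul_add, h, add_comm]

theorem exists_ne_zero_mul_eq_mul_of_mul_self_eq {a b c : R} (hac : a * a = c * c) (hb : b ≠ 0)
    (hba : b * a = -(a * b)) : ∃ p ≠ 0, p * a = c * p := by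
  by_cases hca : a + c = 0
  · refine ⟨b, hb, ?_⟩
    rw [eq_neg_of_add_eq_zero_right hca, hba, neg_mul]
  · exact ⟨a + c, hca, add_mul_eq_mul_add_of_mul_self_eq hac⟩

theorem exists_ne_zero_commute_mul_eq_mul {a b w : R} (ha : a ≠ 0) (hb : b * b = -1)
    (hw : w * w = -1) (hba : b * a = -(a * b)) (hwa : w * a = -(a * w)) :
    ∃ r ≠ 0, r * a = a * r ∧ r * b = w * r := by
  by_cases hwb : 1 - w * b = 0
  · have hwb_eq : w = -b := by
      calc w = -(w * b * b) := by rw [mul_assoc, hb]; noncomm_ring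
        _ = -b := by rw [← sub_eq_zero.mp hwb, one_mul]
    refine ⟨a, ha, rfl, ?_⟩
    rw [hwb_eq, neg_mul, hba, neg_neg]
  · refine ⟨1 - w * b, hwb, ?_, ?_⟩
    · calc (1 - w * b) * a = a - w * (b * a) := by noncomm_ring
        _ = a - a * w * b := by rw [hba, mul_neg, ← mul_assoc, hwa]; noncomm_ring
        _ = a * (1 - w * b) := by noncomm_ring
    · calc (1 - w * b) * b = b + w := by rw [sub_mul, mul_assoc, hb]; noncomm_ring
        _ = w * (1 - w * b) := by rw [mul_sub, ← mul_assoc, hw]; noncomm_ring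

end Ring

section DivisionRing

variable {D : Type*} [DivisionRing D]

theorem exists_ne_zero_intertwining_of_quaternion_relations {a b c d : D}
    (ha : a * a = -1) (hb : b * b = -1) (hba : b * a = -(a * b))
    (hc : c * c = -1) (hd : d * d = -1) (hdc : d * c = -(c * d)) :
    ∃ q ≠ 0, q * a = c * q ∧ q * b = d * q := by
  obtain ⟨p, hp, hpa⟩ := exists_ne_zero_mul_eq_mul_of_mul_self_eq (ha.trans hc.symm)
    (ne_zero_of_mul_self_eq_neg_one hb) hba
  set w := p⁻¹ * (d * p)
  have hpw : p * w = d * p := mul_inv_cancel_left₀ hp _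
  have hww : w * w = -1 := mul_left_cancel₀ hp <| by
    calc p * (w * w) = d * d * p := by rw [← mul_assoc, hpw, mul_assoc, hpw, mul_assoc]
      _ = p * -1 := by rw [hd]; noncomm_ring
  have hwa : w * a = -(a * w) := mul_left_cancel₀ hp <| by
    calc p * (w * a) = d * c * p := by rw [← mul_assoc, hpw, mul_assoc, hpa, mul_assoc]
      _ = -(c * p * w) := by rw [hdc, mul_assoc, hpw]; noncomm_ring
      _ = p * -(a * w) := by rw [← hpa]; noncomm_ring
  obtain ⟨r, hr, hra, hrb⟩ :=
    exists_ne_zero_commute_mul_eq_mul (ne_zero_of_mul_self_eq_neg_one ha) hb hww hba hwa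
  refine ⟨p * r, mul_ne_zero hp hr, ?_, ?_⟩
  · rw [mul_assoc, hra, ← mul_assoc, hpa, mul_assoc]
  · rw [mul_assoc, hrb, ← mul_assoc, hpw, mul_assoc]

end DivisionRing

theorem smul_mul_mul_inv_smul {K A : Type*} [Field K] [DivisionRing A] [Algebra K A] {r : K}
    (hr : r ≠ 0) (q x : A) : r • q * x * (r • q)⁻¹ = q * x * q⁻¹ := by
  rw [smul_inv₀, smul_mul_assoc, smul_mul_assoc, mul_smul_comm, smul_smul, mul_inv_cancel₀ hr,
    one_smul]

namespace QuaternionAlgebra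

variable {R D : Type*} [CommRing R] [DivisionRing D] [Algebra R D]

namespace Basis

variable (B : Basis D (-1 : R) 0 (-1))

theorem i_mul_i_eq_neg_one : B.i * B.i = -1 := by
  simp [B.i_mul_i]

theorem j_mul_j_eq_neg_one : B.j * B.j = -1 := by
  simp [B.j_mul_j]

theorem j_mul_i_eq_neg_i_mul_j : B.j * B.i = -(B.i * B.j) := by
  simp [B.j_mul_i, B.i_mul_j]

theorem exists_ne_zero_intertwining (B' : Basis D (-1 : R) 0 (-1)) :
    ∃ q ≠ 0, q * B.i = B'.i * q ∧ q * B.j = B'.j * q :=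
  exists_ne_zero_intertwining_of_quaternion_relations B.i_mul_i_eq_neg_one B.j_mul_j_eq_neg_one
    B.j_mul_i_eq_neg_i_mul_j B'.i_mul_i_eq_neg_one B'.j_mul_j_eq_neg_one
    B'.j_mul_i_eq_neg_i_mul_j

end Basis

theorem exists_ne_zero_algHom_apply_eq_conj (f g : ℍ[R,-1,0,-1] →ₐ[R] D) :
    ∃ q ≠ 0, ∀ x, g x = q * f x * q⁻¹ := by
  obtain ⟨q, hq, hi, hj⟩ := (lift.symm f).exists_ne_zero_intertwining (lift.symm g)
  let ψ := MulSemiringAction.toAlgHom R D (ConjAct.toConjAct (Units.mk0 q hq))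
  have hψ (y : D) : ψ y = q * y * q⁻¹ := by simp [ψ, ConjAct.units_smul_def]
  have hg : g = ψ.comp f := hom_ext
    (by simp only [AlgHom.comp_apply, hψ]; exact (eq_mul_inv_iff_mul_eq₀ hq).mpr hi.symm)
    (by simp only [AlgHom.comp_apply, hψ]; exact (eq_mul_inv_iff_mul_eq₀ hq).mpr hj.symm)
  exact ⟨q, hq, fun x => by rw [hg, AlgHom.comp_apply, hψ]⟩

end QuaternionAlgebra

/-- Every automorphism of the algebra `ℍ` is inner: it is conjugation by a unit quaternion. -/
theorem quaternion_aut_is_inner (φ : Quaternion ℝ ≃ₐ[ℝ] Quaternion ℝ) :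
    ∃ q : Quaternion ℝ, ‖q‖ = 1 ∧ ∀ x : Quaternion ℝ, φ x = q * x * q⁻¹ := by
  obtain ⟨q, hq, hφ⟩ :=
    QuaternionAlgebra.exists_ne_zero_algHom_apply_eq_conj (AlgHom.id ℝ ℍ[ℝ]) φ.toAlgHom
  have hq_norm : ‖q‖ ≠ 0 := norm_ne_zero_iff.mpr hq
  refine ⟨‖q‖⁻¹ • q, by rw [norm_smul, norm_inv, norm_norm, inv_mul_cancel₀ hq_norm], fun x => ?_⟩
  rw [smul_mul_mul_inv_smul (inv_ne_zero hq_norm)]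
  exact hφ x
end

section
/- Let E be a finite-dimensional left ℍ-module and ι : U → E an injective ℝ-linear map from a real vector space U such that im ι + J(im ι) = E for every admissible linear complex structure J on E. Then 2·dim_ℝ U ≥ dim_ℝ E. -/
/-! A single admissible complex structure `J` already suffices: `E = im ι + J(im ι)` is a sum of
two subspaces of dimension at most `dim U`. -/

open Module

theorem Submodule.finrank_sup_map_le_two_mul {K V : Type*} [DivisionRing K] [AddCommGroup V]
    [Module K V] (S : Submodule K V) [FiniteDimensional K S] (f : V →ₗ[K] V) :
    finrank K ↥(S ⊔ S.map f) ≤ 2 * finrank K S :=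
  calc finrank K ↥(S ⊔ S.map f) ≤ finrank K S + finrank K ↥(S.map f) :=
        Submodule.finrank_add_le_finrank_add_finrank S (S.map f)
    _ ≤ finrank K S + finrank K S := Nat.add_le_add_left (Submodule.finrank_map_le f S) _
    _ = 2 * finrank K S := (two_mul _).symm

theorem LinearMap.finrank_le_two_mul_of_range_sup_map_range_eq_top {K U V : Type*}
    [DivisionRing K] [AddCommGroup U] [Module K U] [AddCommGroup V] [Module K V]
    [FiniteDimensional K V] (ι : U →ₗ[K] V) (hinj : Function.Injective ι) (f : V →ₗ[K] V)
    (hspan : range ι ⊔ (range ι).map f = ⊤) :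
    finrank K V ≤ 2 * finrank K U := by
  have := (range ι).finrank_sup_map_le_two_mul f
  rwa [hspan, finrank_top, finrank_range_of_inj hinj] at this

theorem Quaternion.exists_re_eq_zero_and_norm_eq_one :
    ∃ q : Quaternion ℝ, q.re = 0 ∧ ‖q‖ = 1 := by
  let q : Quaternion ℝ := ⟨0, 1, 0, 0⟩
  refine ⟨q, rfl, ?_⟩
  rw [← pow_eq_one_iff_of_nonneg (norm_nonneg _) two_ne_zero, sq, ← normSq_eq_norm_mul_self,
    normSq_def']
  norm_num

/-- If `ι : U → E` is an injective real-linear map into a finite-dimensional left `ℍ`-module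
with `im ι + J(im ι) = E` for every admissible linear complex structure `J` (multiplication by
a purely imaginary unit quaternion), then `2 dim U ≥ dim E`. -/
theorem CR_quaternionic_dim_bound
    {E U : Type*} [AddCommGroup E] [Module ℝ E] [Module (Quaternion ℝ) E]
    [IsScalarTower ℝ (Quaternion ℝ) E] [FiniteDimensional ℝ E]
    [AddCommGroup U] [Module ℝ U]
    (ι : U →ₗ[ℝ] E) (hinj : Function.Injective ι)
    (h : ∀ q : Quaternion ℝ, q.re = 0 → ‖q‖ = 1 →
      ∀ e : E, ∃ u u' : U, e = ι u + q • ι u') :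
    Module.finrank ℝ E ≤ 2 * Module.finrank ℝ U := by
  obtain ⟨q, hre, hnorm⟩ := Quaternion.exists_re_eq_zero_and_norm_eq_one
  let J : E →ₗ[ℝ] E := DistribSMul.toLinearMap ℝ E q
  refine ι.finrank_le_two_mul_of_range_sup_map_range_eq_top hinj J (eq_top_iff.mpr fun e _ => ?_)
  obtain ⟨u, u', rfl⟩ := h q hre hnorm e
  exact Submodule.add_mem_sup (LinearMap.mem_range_self ι u)
    (Submodule.mem_map_of_mem (LinearMap.mem_range_self ι u'))
end

section
/- The group of f-quaternionic linear automorphisms of Im ℍ (with its standard f-quaternionic structure) is CO(3), the group of conformal linear transformations of ℝ³ = Im ℍ (nonzero scalar multiples of orthogonal transformations with positive determinant factor, i.e. ℝ₊ × O(3) acting as similarities). -/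
/-!
If `t = c • e` with `e` orthogonal, the images `a, b, d` of `i, j, k` under `e` are orthonormal
imaginary quaternions, so `a * b * d` is a real number of norm one and `a * b = ε • d` with
`ε = ±1`. Hence `i ↦ ε • a`, `j ↦ ε • b` extends to an algebra endomorphism `φ` of `ℍ` with
`φ = ε • e` on `Im ℍ`, and `t̃ = (ε * c) • φ` is a lift of `t`, with `T = φ`. Conversely, for a
unit imaginary `q` we have `t̃ q = T q * t̃ 1`, where `t̃ 1` is a nonzero real `s`, so `t` scales
norms by `|s|`.
-/

noncomputable def reLin : Quaternion ℝ →ₗ[ℝ] ℝ where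
  toFun x := x.re
  map_add' _ _ := rfl
  map_smul' _ _ := rfl

noncomputable def imH : Submodule ℝ (Quaternion ℝ) := LinearMap.ker reLin

open Quaternion
open scoped InnerProductSpace

namespace Quaternion

variable {a b d : ℍ[ℝ]}

theorem inner_eq_neg_re_mul (hb : b.re = 0) : ⟪a, b⟫_ℝ = -(a * b).re := by
  rw [inner_def, star_eq_neg.2 hb, mul_neg, re_neg]

theorem mul_self_eq_neg_one (ha : a.re = 0) (ha1 : ‖a‖ = 1) : a * a = -1 := by
  have h := sq_eq_neg_normSq.2 ha
  rwa [sq, normSq_eq_norm_mul_self, ha1, mul_one, coe_one] at h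

theorem mul_comm_eq_neg_of_inner_eq_zero (ha : a.re = 0) (hb : b.re = 0) (hab : ⟪a, b⟫_ℝ = 0) :
    b * a = -(a * b) := by
  have hre : (a * b).re = 0 := by rw [inner_eq_neg_re_mul hb] at hab; linarith
  calc b * a = star (a * b) := by rw [star_mul, star_eq_neg.2 ha, star_eq_neg.2 hb, neg_mul_neg]
    _ = -(a * b) := star_eq_neg.2 hre

theorem mul_eq_or_eq_neg_of_orthonormal (ha : a.re = 0) (hb : b.re = 0) (hd : d.re = 0)
    (ha1 : ‖a‖ = 1) (hb1 : ‖b‖ = 1) (hd1 : ‖d‖ = 1)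
    (hab : ⟪a, b⟫_ℝ = 0) (had : ⟪a, d⟫_ℝ = 0) (hbd : ⟪b, d⟫_ℝ = 0) :
    a * b = d ∨ a * b = -d := by
  set z := a * b * d
  have hba := mul_comm_eq_neg_of_inner_eq_zero ha hb hab
  have hda := mul_comm_eq_neg_of_inner_eq_zero ha hd had
  have hdb := mul_comm_eq_neg_of_inner_eq_zero hb hd hbd
  have hstar : star z = z := by
    calc star z = -(d * (b * a)) := by
          rw [star_mul, star_mul, star_eq_neg.2 ha, star_eq_neg.2 hb, star_eq_neg.2 hd]
          noncomm_ring
      _ = z := by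
          rw [hba, mul_neg, neg_neg, ← mul_assoc, hda, neg_mul, mul_assoc, hdb, mul_neg, neg_neg,
            ← mul_assoc]
  have hz : z = z.re := star_eq_self.1 hstar
  have hzre : |z.re| = 1 := by
    rw [← Real.norm_eq_abs, ← norm_coe, ← hz, norm_mul, norm_mul, ha1, hb1, hd1]; norm_num
  have hab_eq : a * b = -(z.re : ℍ[ℝ]) * d := by
    rw [← hz, neg_mul, mul_assoc, mul_self_eq_neg_one hd hd1, mul_neg_one, neg_neg]
  rcases abs_eq zero_le_one |>.1 hzre with h | h
  · right; rw [hab_eq, h]; simp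
  · left; rw [hab_eq, h]; simp

noncomputable def algHomOfOrthonormal (ha : a.re = 0) (hb : b.re = 0) (ha1 : ‖a‖ = 1)
    (hb1 : ‖b‖ = 1) (hab : ⟪a, b⟫_ℝ = 0) : ℍ[ℝ] →ₐ[ℝ] ℍ[ℝ] :=
  QuaternionAlgebra.Basis.liftHom (c₁ := -1) (c₂ := 0) (c₃ := -1)
    { i := a
      j := b
      k := a * b
      i_mul_i := by rw [mul_self_eq_neg_one ha ha1]; simp
      j_mul_j := by rw [mul_self_eq_neg_one hb hb1]; simp
      i_mul_j := rfl
      j_mul_i := by rw [mul_comm_eq_neg_of_inner_eq_zero ha hb hab]; simp }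

theorem algHomOfOrthonormal_apply (ha : a.re = 0) (hb : b.re = 0) (ha1 : ‖a‖ = 1)
    (hb1 : ‖b‖ = 1) (hab : ⟪a, b⟫_ℝ = 0) (x : ℍ[ℝ]) :
    algHomOfOrthonormal ha hb ha1 hb1 hab x = x.re + x.imI • a + x.imJ • b + x.imK • (a * b) :=
  rfl

end Quaternion

namespace imH

theorem coe_re (x : imH) : (x : ℍ[ℝ]).re = 0 := x.2

def i : imH := ⟨⟨0, 1, 0, 0⟩, rfl⟩
def j : imH := ⟨⟨0, 0, 1, 0⟩, rfl⟩
def k : imH := ⟨⟨0, 0, 0, 1⟩, rfl⟩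

theorem eq_imI_smul_i_add (x : imH) :
    x = (x : ℍ[ℝ]).imI • i + (x : ℍ[ℝ]).imJ • j + (x : ℍ[ℝ]).imK • k := by
  apply Subtype.ext
  ext <;>
    simp only [Submodule.coe_add, Submodule.coe_smul, re_add, re_smul, imI_add, imI_smul,
      imJ_add, imJ_smul, imK_add, imK_smul] <;>
    simp [i, j, k, coe_re]

theorem norm_i : ‖i‖ = 1 := by
  rw [Submodule.coe_norm, norm_eq_sqrt_real_inner, inner_self, normSq_def']; simp [i]
theorem norm_j : ‖j‖ = 1 := by
  rw [Submodule.coe_norm, norm_eq_sqrt_real_inner, inner_self, normSq_def']; simp [j]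
theorem norm_k : ‖k‖ = 1 := by
  rw [Submodule.coe_norm, norm_eq_sqrt_real_inner, inner_self, normSq_def']; simp [k]

theorem inner_i_j : ⟪i, j⟫_ℝ = 0 := by
  rw [Submodule.coe_inner, inner_def, re_mul, re_star, imI_star, imJ_star, imK_star]; simp [i, j]
theorem inner_i_k : ⟪i, k⟫_ℝ = 0 := by
  rw [Submodule.coe_inner, inner_def, re_mul, re_star, imI_star, imJ_star, imK_star]; simp [i, k]
theorem inner_j_k : ⟪j, k⟫_ℝ = 0 := by
  rw [Submodule.coe_inner, inner_def, re_mul, re_star, imI_star, imJ_star, imK_star]; simp [j, k]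

end imH

theorem LinearIsometry.exists_algHom_eq_sign_smul (e : imH →ₗᵢ[ℝ] imH) :
    ∃ ε : ℝ, |ε| = 1 ∧ ∃ φ : ℍ[ℝ] →ₐ[ℝ] ℍ[ℝ], ∀ x : imH, φ x = ε • (e x : ℍ[ℝ]) := by
  have hre (x : imH) : (e x : ℍ[ℝ]).re = 0 := imH.coe_re _
  have hnorm {x : imH} (hx : ‖x‖ = 1) : ‖(e x : ℍ[ℝ])‖ = 1 := by
    rw [← Submodule.coe_norm, e.norm_map, hx]
  have hinner {x y : imH} (hxy : ⟪x, y⟫_ℝ = 0) : ⟪(e x : ℍ[ℝ]), (e y : ℍ[ℝ])⟫_ℝ = 0 := by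
    rw [← Submodule.coe_inner, e.inner_map_map, hxy]
  obtain ⟨ε, hε, hprod⟩ :
      ∃ ε : ℝ, |ε| = 1 ∧ (e imH.i : ℍ[ℝ]) * e imH.j = ε • (e imH.k : ℍ[ℝ]) := by
    rcases mul_eq_or_eq_neg_of_orthonormal (hre _) (hre _) (hre _) (hnorm imH.norm_i)
      (hnorm imH.norm_j) (hnorm imH.norm_k) (hinner imH.inner_i_j) (hinner imH.inner_i_k)
      (hinner imH.inner_j_k) with h | h
    · exact ⟨1, by simp, by rw [h, one_smul]⟩
    · exact ⟨-1, by simp, by rw [h, neg_one_smul]⟩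
  have hεε : ε * ε = 1 := by rw [← abs_mul_abs_self, hε, one_mul]
  have hre' (x : imH) : (ε • (e x : ℍ[ℝ])).re = 0 := by rw [re_smul, hre, smul_zero]
  have hnorm' {x : imH} (hx : ‖x‖ = 1) : ‖ε • (e x : ℍ[ℝ])‖ = 1 := by
    rw [norm_smul, Real.norm_eq_abs, hε, hnorm hx, one_mul]
  have hinner' : ⟪ε • (e imH.i : ℍ[ℝ]), ε • (e imH.j : ℍ[ℝ])⟫_ℝ = 0 := by
    rw [real_inner_smul_left, real_inner_smul_right, hinner imH.inner_i_j, mul_zero, mul_zero]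
  refine ⟨ε, hε, (algHomOfOrthonormal (hre' _) (hre' _) (hnorm' imH.norm_i) (hnorm' imH.norm_j)
    hinner'), fun x => ?_⟩
  have hx := congrArg (fun y => (e y : ℍ[ℝ])) (imH.eq_imI_smul_i_add x)
  simp only [map_add, map_smul, Submodule.coe_add, Submodule.coe_smul] at hx
  rw [algHomOfOrthonormal_apply, imH.coe_re, coe_zero, zero_add, smul_mul_smul_comm, hprod,
    smul_smul, hεε, one_smul, hx]
  module

section Lift

/-- `T q` is the unit imaginary quaternion with `tt ∘ J_q = J_(T q) ∘ tt`, where `J_q` is left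
multiplication by `q`. -/
def IsFQuaternionicLift (t : imH →ₗ[ℝ] imH) (tt : ℍ[ℝ] →ₗ[ℝ] ℍ[ℝ]) : Prop :=
  Function.Bijective tt ∧
    (∃ T : ℍ[ℝ] → ℍ[ℝ], ∀ q : ℍ[ℝ], q.re = 0 → ‖q‖ = 1 →
      ((T q).re = 0 ∧ ‖T q‖ = 1 ∧ ∀ x : ℍ[ℝ], tt (q * x) = T q * tt x)) ∧
    (∀ r : ℝ, ∃ s : ℝ, tt (r : ℍ[ℝ]) = (s : ℍ[ℝ])) ∧
    (∀ x : imH, tt (x : ℍ[ℝ]) = (t x : ℍ[ℝ]))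

variable {t : imH →ₗ[ℝ] imH}

theorem IsFQuaternionicLift.exists_norm_map_eq {tt : ℍ[ℝ] →ₗ[ℝ] ℍ[ℝ]}
    (h : IsFQuaternionicLift t tt) : ∃ c : ℝ, 0 < c ∧ ∀ x : imH, ‖t x‖ = c * ‖x‖ := by
  obtain ⟨hbij, ⟨T, hT⟩, hreal, hext⟩ := h
  obtain ⟨s, hs⟩ := hreal 1
  rw [coe_one] at hs
  have hs0 : s ≠ 0 := by
    rintro rfl
    exact one_ne_zero (hbij.1 (by rw [hs, coe_zero, map_zero]))
  have hunit {q : ℍ[ℝ]} (hq : q.re = 0) (hq1 : ‖q‖ = 1) : ‖tt q‖ = |s| := by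
    obtain ⟨-, hTq, hmul⟩ := hT q hq hq1
    rw [← mul_one q, hmul, hs, norm_mul, hTq, norm_coe, one_mul, Real.norm_eq_abs]
  refine ⟨|s|, abs_pos.2 hs0, fun x => ?_⟩
  rcases eq_or_ne x 0 with rfl | hx
  · simp
  have hx0 : ‖x‖ ≠ 0 := norm_ne_zero_iff.2 hx
  have hq : (‖x‖⁻¹ • (x : ℍ[ℝ])).re = 0 := by rw [re_smul, imH.coe_re, smul_zero]
  have hq1 : ‖‖x‖⁻¹ • (x : ℍ[ℝ])‖ = 1 := by
    rw [norm_smul, norm_inv, norm_norm, ← Submodule.coe_norm, inv_mul_cancel₀ hx0]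
  have htx : (t x : ℍ[ℝ]) = ‖x‖ • tt (‖x‖⁻¹ • (x : ℍ[ℝ])) := by
    rw [map_smul, hext, smul_smul, mul_inv_cancel₀ hx0, one_smul]
  rw [Submodule.coe_norm, htx, norm_smul, norm_norm, hunit hq hq1, mul_comm]

theorem exists_isFQuaternionicLift_of_norm_map_eq {c : ℝ} (hc : 0 < c)
    (ht : ∀ x : imH, ‖t x‖ = c * ‖x‖) : ∃ tt, IsFQuaternionicLift t tt := by
  let e : imH →ₗᵢ[ℝ] imH :=
    { toLinearMap := c⁻¹ • t
      norm_map' := fun x => by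
        rw [LinearMap.smul_apply, norm_smul, ht, norm_inv, Real.norm_of_nonneg hc.le,
          inv_mul_cancel_left₀ hc.ne'] }
  obtain ⟨ε, hε, φ, hφ⟩ := e.exists_algHom_eq_sign_smul
  have hεc : ε * c ≠ 0 := mul_ne_zero (by rintro rfl; simp at hε) hc.ne'
  have hinj : Function.Injective ((ε * c) • φ.toLinearMap) :=
    (smul_right_injective ℍ[ℝ] hεc).comp φ.toRingHom.injective
  refine ⟨(ε * c) • φ.toLinearMap, ⟨hinj, LinearMap.injective_iff_surjective.1 hinj⟩,
    ⟨φ, fun q hq hq1 => ⟨?_, ?_, fun y => ?_⟩⟩, fun r => ⟨ε * c * r, ?_⟩, fun x => ?_⟩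
  · rw [show q = ((⟨q, hq⟩ : imH) : ℍ[ℝ]) from rfl, hφ, re_smul, imH.coe_re, smul_zero]
  · rw [show q = ((⟨q, hq⟩ : imH) : ℍ[ℝ]) from rfl, hφ, norm_smul, Real.norm_eq_abs, hε, one_mul,
      ← Submodule.coe_norm, e.norm_map, Submodule.coe_norm, hq1]
  · simp only [LinearMap.smul_apply, AlgHom.toLinearMap_apply, map_mul, mul_smul_comm]
  · rw [LinearMap.smul_apply, AlgHom.toLinearMap_apply, ← algebraMap_def, φ.commutes,
      algebraMap_def, smul_coe]
  · have hcoef : ε * c * ε * c⁻¹ = 1 := by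
      rw [mul_right_comm ε, ← abs_mul_abs_self, hε, one_mul, one_mul, mul_inv_cancel₀ hc.ne']
    rw [LinearMap.smul_apply, AlgHom.toLinearMap_apply, hφ, smul_smul]
    change (ε * c * ε) • c⁻¹ • (t x : ℍ[ℝ]) = t x
    rw [smul_smul, hcoef, one_smul]

end Lift

theorem fq_automorphisms_of_imH_eq_CO3_general
    (t : imH →ₗ[ℝ] imH) :
    (∃ tt : Quaternion ℝ →ₗ[ℝ] Quaternion ℝ, Function.Bijective tt ∧
      (∃ T : Quaternion ℝ → Quaternion ℝ,
        ∀ q : Quaternion ℝ, q.re = 0 → ‖q‖ = 1 →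
          ((T q).re = 0 ∧ ‖T q‖ = 1 ∧ ∀ x : Quaternion ℝ, tt (q * x) = T q * tt x)) ∧
      (∀ r : ℝ, ∃ s : ℝ, tt (r : Quaternion ℝ) = (s : Quaternion ℝ)) ∧
      (∀ x : imH, tt (x : Quaternion ℝ) = (t x : Quaternion ℝ)))
    ↔ (∃ c : ℝ, 0 < c ∧ ∀ x : imH, ‖t x‖ = c * ‖x‖) :=
  ⟨fun ⟨_, h⟩ => IsFQuaternionicLift.exists_norm_map_eq h,
    fun ⟨_, hc, ht⟩ => exists_isFQuaternionicLift_of_norm_map_eq hc ht⟩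

/-- The group of f-quaternionic linear automorphisms of `Im ℍ` (with its standard f-quaternionic
structure `ℍ = Im ℍ ⊕ ℝ`) is `CO(3)`: a bijective real-linear map `t : Im ℍ → Im ℍ` admits a
quaternionic linear lift `t̃ : ℍ → ℍ` preserving `ℝ` and restricting to `t` on `Im ℍ` if and only
if `t` is a similarity, i.e. `‖t x‖ = c ‖x‖` for some constant `c > 0`. -/
theorem fq_automorphisms_of_imH_eq_CO3
    (t : imH →ₗ[ℝ] imH) (hbij : Function.Bijective t) :
    (∃ tt : Quaternion ℝ →ₗ[ℝ] Quaternion ℝ, Function.Bijective tt ∧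
      (∃ T : Quaternion ℝ → Quaternion ℝ,
        ∀ q : Quaternion ℝ, q.re = 0 → ‖q‖ = 1 →
          ((T q).re = 0 ∧ ‖T q‖ = 1 ∧ ∀ x : Quaternion ℝ, tt (q * x) = T q * tt x)) ∧
      (∀ r : ℝ, ∃ s : ℝ, tt (r : Quaternion ℝ) = (s : Quaternion ℝ)) ∧
      (∀ x : imH, tt (x : Quaternion ℝ) = (t x : Quaternion ℝ)))
    ↔ (∃ c : ℝ, 0 < c ∧ ∀ x : imH, ‖t x‖ = c * ‖x‖) :=
  fq_automorphisms_of_imH_eq_CO3_general t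
end

section
/- Let U be a real vector space, U^ℍ = ℍ ⊗_ℝ U, and Λ the set of conjugations τ_q (q ∈ S²) on U^ℍ. Suppose C ⊆ U^ℍ is an ℍ-submodule satisfying (1) C ∩ ⋂_{τ∈Λ} τ(C) = 0 and (2) C + σ(C) = U^ℍ for every σ ∈ Λ. Then, setting E = U^ℍ/C and letting ι : U → E be the composition of u ↦ 1 ⊗ u with the quotient projection, the pair (E, ι) is a linear CR quaternionic structure on U: ι is injective and im ι + J(im ι) = E for every admissible linear complex structure J on E. -/
/-! Every `x + τ_q x` lies in `(ℝ ⊕ ℝq) ⊗ U`, because `p - q p q` is twice the component of `p`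
in the plane `ℝ ⊕ ℝq`: `q` anticommutes with the imaginary quaternions orthogonal to it. Writing
`x = c + τ_q c'` with `c, c' ∈ C`, the class of `x` is that of `c' + τ_q c'`, i.e. `ι u + q ι u'`.
Injectivity of `ι` holds because `1 ⊗ u` is fixed by every `τ_q`, so `1 ⊗ u ∈ C` forces
`1 ⊗ u ∈ C ∩ ⋂ τ(C) = 0`. -/

open TensorProduct

/-- The real-linear map `p ↦ -q p q` on `ℍ`. -/
noncomputable def quatConjMap (q : Quaternion ℝ) : Quaternion ℝ →ₗ[ℝ] Quaternion ℝ :=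
  LinearMap.mulLeft ℝ (-q) ∘ₗ LinearMap.mulRight ℝ q

/-- The conjugation `τ_q : q' ⊗ u ↦ -q q' q ⊗ u` on the quaternionification `U^ℍ = ℍ ⊗_ℝ U`. -/
noncomputable def tauQ (U : Type*) [AddCommGroup U] [Module ℝ U] (q : Quaternion ℝ) :
    (Quaternion ℝ) ⊗[ℝ] U →ₗ[ℝ] (Quaternion ℝ) ⊗[ℝ] U :=
  TensorProduct.map (quatConjMap q) LinearMap.id

variable {U : Type*} [AddCommGroup U] [Module ℝ U]

/-- The intersection `⋂_{τ ∈ Λ} τ(S)` over all conjugations `τ_q`, `q ∈ S²`. -/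
noncomputable def interConj (S : Submodule ℝ ((Quaternion ℝ) ⊗[ℝ] U)) :
    Submodule ℝ ((Quaternion ℝ) ⊗[ℝ] U) :=
  ⨅ q ∈ {q : Quaternion ℝ | q.re = 0 ∧ ‖q‖ = 1}, Submodule.map (tauQ U q) S

/-- For an `ℍ`-submodule `C ⊆ U^ℍ`, the natural map `ι : U → U^ℍ/C`,
`u ↦ (1 ⊗ u) mod C`. -/
noncomputable def iotaQuot (C : Submodule (Quaternion ℝ) ((Quaternion ℝ) ⊗[ℝ] U)) :
    U →ₗ[ℝ] ((Quaternion ℝ) ⊗[ℝ] U) ⧸ C :=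
  (C.mkQ.restrictScalars ℝ) ∘ₗ (TensorProduct.mk ℝ (Quaternion ℝ) U 1)

open Quaternion

lemma Quaternion.sub_mul_mul_self_eq {q : ℍ[ℝ]} (hre : q.re = 0) (hq : ‖q‖ = 1)
    (p : ℍ[ℝ]) : p - q * p * q = (2 * p.re) • (1 : ℍ[ℝ]) + (-2 * (p * q).re) • q := by
  have hnorm : normSq q = 1 := by rw [normSq_eq_norm_mul_self, hq, mul_one]
  rw [normSq_def', hre] at hnorm
  ext <;> simp only [re_sub, imI_sub, imJ_sub, imK_sub, re_add, imI_add, imJ_add, imK_add,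
    re_mul, imI_mul, imJ_mul, imK_mul, re_smul, imI_smul, imJ_smul, imK_smul, re_one, imI_one,
    imJ_one, imK_one, hre, smul_eq_mul]
  · linear_combination p.re * hnorm
  · linear_combination (-p.imI) * hnorm
  · linear_combination (-p.imJ) * hnorm
  · linear_combination (-p.imK) * hnorm

lemma Quaternion.mul_self_eq_neg_one_s19 {q : ℍ[ℝ]} (hre : q.re = 0) (hq : ‖q‖ = 1) :
    q * q = -1 := by
  rw [← sq, sq_eq_neg_normSq.mpr hre, normSq_eq_norm_mul_self, hq, mul_one, coe_one]

section

lemma tauQ_tmul (q p : ℍ[ℝ]) (u : U) : tauQ U q (p ⊗ₜ u) = (-(q * p * q)) ⊗ₜ u := by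
  simp [tauQ, quatConjMap, mul_assoc]

lemma tauQ_one_tmul {q : ℍ[ℝ]} (hre : q.re = 0) (hq : ‖q‖ = 1) (u : U) :
    tauQ U q (1 ⊗ₜ u) = 1 ⊗ₜ u := by
  rw [tauQ_tmul, mul_one, mul_self_eq_neg_one_s19 hre hq, neg_neg]

lemma exists_add_tauQ_eq {q : ℍ[ℝ]} (hre : q.re = 0) (hq : ‖q‖ = 1) (x : ℍ[ℝ] ⊗[ℝ] U) :
    ∃ u u' : U, x + tauQ U q x = 1 ⊗ₜ u + q ⊗ₜ u' := by
  induction x using TensorProduct.induction_on with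
  | zero => exact ⟨0, 0, by simp⟩
  | tmul p v =>
    refine ⟨(2 * p.re) • v, (-2 * (p * q).re) • v, ?_⟩
    rw [tauQ_tmul, ← add_tmul, ← sub_eq_add_neg, sub_mul_mul_self_eq hre hq, add_tmul,
      smul_tmul, smul_tmul]
  | add x y hx hy =>
    obtain ⟨u₁, u₁', hx⟩ := hx
    obtain ⟨u₂, u₂', hy⟩ := hy
    refine ⟨u₁ + u₂, u₁' + u₂', ?_⟩
    rw [map_add, tmul_add, tmul_add, add_add_add_comm, hx, hy, add_add_add_comm]

lemma one_tmul_mem_interConj {S : Submodule ℝ (ℍ[ℝ] ⊗[ℝ] U)} {u : U} (hu : 1 ⊗ₜ u ∈ S) :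
    1 ⊗ₜ u ∈ interConj S := by
  simp only [interConj, Submodule.mem_iInf]
  rintro q ⟨hre, hq⟩
  exact ⟨1 ⊗ₜ u, hu, tauQ_one_tmul hre hq u⟩

variable (C : Submodule ℍ[ℝ] (ℍ[ℝ] ⊗[ℝ] U))

lemma smul_iotaQuot (p : ℍ[ℝ]) (u : U) : p • iotaQuot C u = C.mkQ (p ⊗ₜ u) := by
  rw [iotaQuot, LinearMap.comp_apply, LinearMap.restrictScalars_apply, ← map_smul, mk_apply,
    smul_tmul', smul_eq_mul, mul_one]

lemma iotaQuot_injective (h : C.restrictScalars ℝ ⊓ interConj (C.restrictScalars ℝ) = ⊥) :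
    Function.Injective (iotaQuot C) := by
  refine (injective_iff_map_eq_zero _).mpr fun u hu ↦ ?_
  have hC : 1 ⊗ₜ u ∈ C.restrictScalars ℝ := (Submodule.Quotient.mk_eq_zero C).mp hu
  have h0 : 1 ⊗ₜ[ℝ] u ∈ (⊥ : Submodule ℝ (ℍ[ℝ] ⊗[ℝ] U)) := h ▸ ⟨hC, one_tmul_mem_interConj hC⟩
  simpa using h0

lemma exists_eq_iotaQuot_add_smul_iotaQuot {q : ℍ[ℝ]} (hre : q.re = 0) (hq : ‖q‖ = 1)
    (h : C.restrictScalars ℝ ⊔ (C.restrictScalars ℝ).map (tauQ U q) = ⊤)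
    (e : (ℍ[ℝ] ⊗[ℝ] U) ⧸ C) : ∃ u u' : U, e = iotaQuot C u + q • iotaQuot C u' := by
  obtain ⟨x, rfl⟩ := C.mkQ_surjective e
  obtain ⟨c, hc, _, ⟨c', hc', rfl⟩, rfl⟩ := Submodule.mem_sup.mp (h ▸ Submodule.mem_top (x := x))
  obtain ⟨u, u', hu⟩ := exists_add_tauQ_eq hre hq c'
  refine ⟨u, u', ?_⟩
  rw [← one_smul ℍ[ℝ] (iotaQuot C u), smul_iotaQuot, smul_iotaQuot, ← map_add, ← hu,
    Submodule.mkQ_apply, Submodule.mkQ_apply, Submodule.Quotient.eq, add_sub_add_right_eq_sub]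
  exact sub_mem hc hc'

end

/-- The intrinsic description of linear CR quaternionic structures: if `C ⊆ U^ℍ` is an
`ℍ`-submodule with (1) `C ∩ ⋂_{τ∈Λ} τ(C) = 0` and (2) `C + σ(C) = U^ℍ` for every conjugation
`σ ∈ Λ`, then `E = U^ℍ/C` together with `ι : u ↦ (1 ⊗ u) mod C` is a linear CR quaternionic
structure on `U`: `ι` is injective and `im ι + J(im ι) = E` for every admissible linear complex
structure `J` on `E` (multiplication by an imaginary unit quaternion). -/
theorem intrinsic_CR_quaternionic_structure
    (C : Submodule (Quaternion ℝ) ((Quaternion ℝ) ⊗[ℝ] U))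
    (h1 : C.restrictScalars ℝ ⊓ interConj (C.restrictScalars ℝ) = ⊥)
    (h2 : ∀ q : Quaternion ℝ, q.re = 0 → ‖q‖ = 1 →
      C.restrictScalars ℝ ⊔ Submodule.map (tauQ U q) (C.restrictScalars ℝ) = ⊤) :
    Function.Injective (iotaQuot C) ∧
    ∀ q : Quaternion ℝ, q.re = 0 → ‖q‖ = 1 →
      ∀ e : ((Quaternion ℝ) ⊗[ℝ] U) ⧸ C,
        ∃ u u' : U, e = iotaQuot C u + q • iotaQuot C u' := by
  exact ⟨iotaQuot_injective C h1, fun q hre hq ↦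
    exists_eq_iotaQuot_add_smul_iotaQuot C hre hq (h2 q hre hq)⟩
end
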